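/- arXiv:1903.10402 — 6 statements merged into one kernel-verified Lean document; each statement's English description precedes it below -/
import Mathlib

section
/- Mutual exclusion for the asymmetric algorithm: in every reachable global state of the asymmetric algorithm, at most one process p_i has its program counter at the critical section; i.e., no two processes are in the critical section state at the same time. -/
/-!
Model of the asymmetric mutual-exclusion algorithm with a coordinator.

Shared variables:
* `turn : Option (Fin N)` where `none` stands for THINKING,
* `flag : Fin N → Flag` with values REMAINDER / WAITING.

Process `i` automaton: state 1 --(flag[i]:=WAITING)--> state 2
--(turn = i ⇒)--> critical section --(flag[i]:=REMAINDER)--> state 3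
--(turn := THINKING)--> state 4.

Coordinator automaton (local counter `p`, initially set to 0):
state 1 --(p:=0)--> state 2; state 2 --(flag[p]≠WAITING ⇒)--> state 3;
state 2 --(flag[p]=WAITING ⇒)--> state 2.1 --(turn:=p)--> state 2.2
--(turn=THINKING ⇒)--> state 3; state 3 --(p:=(p+1) mod N)--> state 2.
-/

namespace Asym

inductive Flag
  | remainder | waiting
  deriving DecidableEq

/-- Program counter of a process. -/
inductive PPC
  | s1 | s2 | cs | s3 | s4
  deriving DecidableEq

/-- Program counter of the coordinator. -/
inductive CPC
  | c1 | c2 | c21 | c22 | c3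
  deriving DecidableEq

/-- A global state. -/
structure St (N : ℕ) where
  /-- `none` encodes THINKING. -/
  turn : Option (Fin N)
  flag : Fin N → Flag
  pc : Fin N → PPC
  cpc : CPC
  p : Fin N

/-- The initial global state. -/
def initSt (N : ℕ) [NeZero N] : St N where
  turn := none
  flag := fun _ => .remainder
  pc := fun _ => .s1
  cpc := .c1
  p := 0

/-- Who takes a step: a process or the coordinator. -/
inductive Label (N : ℕ)
  | proc : Fin N → Label N
  | coord

/-- One enabled transition of a single agent. -/
inductive Step {N : ℕ} [NeZero N] : Label N → St N → St N → Prop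
  | p12 (s : St N) (i : Fin N) (h : s.pc i = .s1) :
      Step (.proc i) s { s with flag := Function.update s.flag i .waiting,
                                pc := Function.update s.pc i .s2 }
  | p2cs (s : St N) (i : Fin N) (h : s.pc i = .s2) (ht : s.turn = some i) :
      Step (.proc i) s { s with pc := Function.update s.pc i .cs }
  | pcs3 (s : St N) (i : Fin N) (h : s.pc i = .cs) :
      Step (.proc i) s { s with flag := Function.update s.flag i .remainder,
                                pc := Function.update s.pc i .s3 }
  | p34 (s : St N) (i : Fin N) (h : s.pc i = .s3) :
      Step (.proc i) s { s with turn := none,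
                                pc := Function.update s.pc i .s4 }
  | c12 (s : St N) (h : s.cpc = .c1) :
      Step .coord s { s with p := 0, cpc := .c2 }
  | c23 (s : St N) (h : s.cpc = .c2) (hf : s.flag s.p ≠ .waiting) :
      Step .coord s { s with cpc := .c3 }
  | c2_21 (s : St N) (h : s.cpc = .c2) (hf : s.flag s.p = .waiting) :
      Step .coord s { s with cpc := .c21 }
  | c21_22 (s : St N) (h : s.cpc = .c21) :
      Step .coord s { s with turn := some s.p, cpc := .c22 }
  | c22_3 (s : St N) (h : s.cpc = .c22) (ht : s.turn = none) :
      Step .coord s { s with cpc := .c3 }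
  | c3_2 (s : St N) (h : s.cpc = .c3) :
      Step .coord s { s with p := s.p + 1, cpc := .c2 }

/-- An execution: a sequence of global states starting from the initial
state, together with a schedule; at each instant either exactly one agent
takes one of its enabled transitions, or (if `none` is scheduled) the
state stutters. -/
structure Exec (N : ℕ) [NeZero N] where
  states : ℕ → St N
  sched : ℕ → Option (Label N)
  init : states 0 = initSt N
  step : ∀ n, match sched n with
    | some l => Step l (states n) (states (n + 1))
    | none => states (n + 1) = states n

/-- An agent is enabled if it can take a transition. -/
def Enabled {N : ℕ} [NeZero N] (l : Label N) (s : St N) : Prop :=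
  ∃ s', Step l s s'

/-- Weak fairness: an agent whose next transition is continuously enabled
eventually takes it. -/
def Exec.Fair {N : ℕ} [NeZero N] (e : Exec N) : Prop :=
  ∀ l n, (∀ m, n ≤ m → Enabled l (e.states m)) → ∃ m, n ≤ m ∧ e.sched m = some l

/-- A state is reachable if it occurs in some execution. -/
def Reachable {N : ℕ} [NeZero N] (s : St N) : Prop :=
  ∃ e : Exec N, ∃ n, e.states n = s

/-!
Mutual exclusion follows from a one-step inductive invariant: every process in the critical
section or in state 3 holds the turn (`turn = some j`), and the turn is THINKING unless the
coordinator is in state 2.2. Since `turn` holds a single value, two processes in the critical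
section must coincide. The invariant survives the coordinator's `turn := p` because in state 2.1
the turn is THINKING, so no process is in the critical section or state 3; it survives a
process's `turn := THINKING` because that process was the only one holding the turn.
-/

structure Invariant {N : ℕ} (s : St N) : Prop where
  turn_eq_of_cs_or_s3 : ∀ j, (s.pc j = .cs ∨ s.pc j = .s3) → s.turn = some j
  turn_eq_none_of_ne_c22 : s.cpc ≠ .c22 → s.turn = none

theorem Invariant.eq_of_cs {N : ℕ} {s : St N} (hs : Invariant s) {i j : Fin N}
    (hi : s.pc i = .cs) (hj : s.pc j = .cs) : i = j :=
  Option.some_injective _ <|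
    (hs.turn_eq_of_cs_or_s3 i (.inl hi)).symm.trans (hs.turn_eq_of_cs_or_s3 j (.inl hj))

section

variable {N : ℕ} [NeZero N]

theorem Reachable.induction {P : St N → Prop} (init : P (initSt N))
    (step : ∀ l s s', Step l s s' → P s → P s') {s : St N} (hs : Reachable s) : P s := by
  obtain ⟨e, n, rfl⟩ := hs
  induction n with
  | zero => rwa [e.init]
  | succ n ih =>
    have hstep := e.step n
    cases hsched : e.sched n with
    | none => rw [hsched] at hstep; rwa [hstep]
    | some l => rw [hsched] at hstep; exact step l _ _ hstep ih

theorem invariant_initSt : Invariant (initSt N) where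
  turn_eq_of_cs_or_s3 j hj := by simp [initSt] at hj
  turn_eq_none_of_ne_c22 _ := rfl

theorem Step.invariant {l : Label N} {s s' : St N} (h : Step l s s') (hs : Invariant s) :
    Invariant s' := by
  obtain ⟨hturn, hnone⟩ := hs
  cases h with
  | p12 s i _ =>
    refine ⟨fun j hj => hturn j ?_, hnone⟩
    rcases eq_or_ne j i with rfl | hne
    · simp at hj
    · simpa [Function.update_of_ne hne] using hj
  | p2cs s i _ ht =>
    refine ⟨fun j hj => ?_, hnone⟩
    rcases eq_or_ne j i with rfl | hne
    · exact ht
    · exact hturn j (by simpa [Function.update_of_ne hne] using hj)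
  | pcs3 s i hi =>
    refine ⟨fun j hj => ?_, hnone⟩
    rcases eq_or_ne j i with rfl | hne
    · exact hturn j (.inl hi)
    · exact hturn j (by simpa [Function.update_of_ne hne] using hj)
  | p34 s i hi =>
    refine ⟨fun j hj => ?_, fun _ => rfl⟩
    rcases eq_or_ne j i with rfl | hne
    · simp at hj
    · have hj' := hturn j (by simpa [Function.update_of_ne hne] using hj)
      exact absurd (Option.some_injective _ (hj'.symm.trans (hturn i (.inr hi)))) hne
  | c12 s hc | c23 s hc _ | c2_21 s hc _ | c3_2 s hc =>
    exact ⟨hturn, fun _ => hnone (by simp [hc])⟩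
  | c21_22 s hc =>
    refine ⟨fun j hj => ?_, fun hc' => absurd rfl hc'⟩
    simpa using (hturn j hj).symm.trans (hnone (by simp [hc]))
  | c22_3 s _ ht => exact ⟨hturn, fun _ => ht⟩

theorem Reachable.invariant {s : St N} (hs : Reachable s) : Invariant s :=
  hs.induction invariant_initSt fun _ _ _ h => h.invariant

end

end Asym

open Asym in
/-- **Mutual exclusion for the asymmetric algorithm.**
In every reachable global state, at most one process is in the
critical-section state. -/
theorem asym_mutual_exclusion {N : ℕ} [NeZero N] (s : St N)
    (hs : Reachable s) (i j : Fin N)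
    (hi : s.pc i = PPC.cs) (hj : s.pc j = PPC.cs) : i = j :=
  hs.invariant.eq_of_cs hi hj
end

section
/- For the asymmetric algorithm: in every fair execution, if at some point the shared variable turn is assigned the value i (by the coordinator moving from state 2.1 to 2.2) while process p_i is in state 2, then process p_i eventually enters the critical section, and no other process enters the critical section before it does. -/
/-!
Invariant: `turn` is THINKING unless the coordinator is in state 2.2, and a process in the critical
section or in state 3 holds the turn. Hence, once `turn := i` is set while `p_i` waits in state 2,
no agent other than `p_i` can change `turn` or move `p_i`: the coordinator waits for THINKING, and
only a process holding the turn could reset it. So `p_i` stays continuously enabled until weak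
fairness schedules it, and every entry into the critical section in the meantime would need the
turn, which belongs to `p_i`.
-/

namespace Asym

variable {N : ℕ} [NeZero N]

def TurnInv (s : St N) : Prop :=
  (s.cpc ≠ CPC.c22 → s.turn = none) ∧
  ∀ j, s.pc j = PPC.cs ∨ s.pc j = PPC.s3 → s.turn = some j

def WaitsWithTurn (i : Fin N) (s : St N) : Prop :=
  s.turn = some i ∧ s.pc i = PPC.s2

namespace Step

variable {l : Label N} {s s' : St N}

theorem turnInv (h : Step l s s') (hs : TurnInv s) : TurnInv s' := by
  obtain ⟨hthink, hholds⟩ := hs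
  cases h with
  | p12 s i _ | pcs3 s i _ =>
    refine ⟨hthink, fun j hj => hholds j ?_⟩
    rcases eq_or_ne j i with rfl | hji <;> simp_all
  | p2cs s i _ ht =>
    refine ⟨fun hc => absurd (hthink hc) (by simp [ht]), fun j hj => ?_⟩
    rcases eq_or_ne j i with rfl | hji
    · exact ht
    · exact hholds j (by simpa [Function.update_of_ne hji] using hj)
  | p34 s i hpc =>
    refine ⟨fun _ => rfl, fun j hj => ?_⟩
    have hji : j ≠ i := by rintro rfl; simp at hj
    have hj' := hholds j (by simpa [Function.update_of_ne hji] using hj)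
    exact absurd (Option.some_injective _ (hj'.symm.trans (hholds i (.inr hpc)))) hji
  | c21_22 s hc =>
    have hthinking : s.turn = none := hthink (by simp [hc])
    exact ⟨fun h => absurd rfl h, fun j hj => absurd (hholds j hj) (by simp [hthinking])⟩
  | c22_3 s _ ht => exact ⟨fun _ => ht, fun j hj => absurd (hholds j hj) (by simp [ht])⟩
  | c12 s hc | c23 s hc _ | c2_21 s hc _ | c3_2 s hc =>
    exact ⟨fun _ => hthink (by simp [hc]), hholds⟩

theorem waitsWithTurn {i : Fin N} (h : Step l s s') (hs : TurnInv s)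
    (hw : WaitsWithTurn i s) (hl : l ≠ Label.proc i) : WaitsWithTurn i s' := by
  obtain ⟨hthink, hholds⟩ := hs
  obtain ⟨hturn, hpc⟩ := hw
  cases h with
  | pcs3 s j hj | p34 s j hj =>
    have hji : j = i := Option.some_injective _ ((hholds j (by simp [hj])).symm.trans hturn)
    exact absurd (congrArg Label.proc hji) hl
  | _ => simp_all [WaitsWithTurn, Function.update_apply]

theorem turn_eq_of_enter_cs {j : Fin N} (h : Step l s s') (hj : s.pc j ≠ PPC.cs)
    (hj' : s'.pc j = PPC.cs) : s.turn = some j := by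
  cases h <;> simp only [Function.update_apply] at hj' <;> (try split_ifs at hj') <;> simp_all

theorem waitsWithTurn_of_c21 (h : Step Label.coord s s') (hc : s.cpc = CPC.c21)
    (hpc : s.pc s.p = PPC.s2) : WaitsWithTurn s.p s' := by
  cases h <;> simp_all [WaitsWithTurn]

theorem pc_eq_cs_of_s2 {i : Fin N} (h : Step (Label.proc i) s s') (hpc : s.pc i = PPC.s2) :
    s'.pc i = PPC.cs := by
  cases h <;> simp_all

end Step

namespace Exec

theorem Fair.exists_sched_of_stable {e : Exec N} (hfair : e.Fair) {l : Label N}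
    {P : St N → Prop} (hen : ∀ s, P s → Enabled l s)
    (hP : ∀ k, P (e.states k) → e.sched k ≠ some l → P (e.states (k + 1)))
    {k₀ : ℕ} (h₀ : P (e.states k₀)) :
    ∃ m, k₀ ≤ m ∧ e.sched m = some l ∧ ∀ k, k₀ ≤ k → k ≤ m → P (e.states k) := by
  have hstay : ∀ m, k₀ ≤ m → (∀ k, k₀ ≤ k → k < m → e.sched k ≠ some l) →
      P (e.states m) := by
    intro m hm
    induction m, hm using Nat.le_induction with
    | base => exact fun _ => h₀
    | succ m hm ih =>
      intro hnot
      exact hP m (ih fun k hk hkm => hnot k hk (by omega)) (hnot m hm (by omega))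
  have hex : ∃ m, k₀ ≤ m ∧ e.sched m = some l := by
    by_contra! hnever
    obtain ⟨m, hm, hsched⟩ :=
      hfair l k₀ fun m hm => hen _ (hstay m hm fun k hk _ => hnever k hk)
    exact hnever m hm hsched
  classical
  obtain ⟨hm, hsched⟩ := Nat.find_spec hex
  refine ⟨Nat.find hex, hm, hsched, fun k hk hkm => hstay k hk fun k' hk' hk'k hs => ?_⟩
  exact Nat.find_min hex (hk'k.trans_le hkm) ⟨hk', hs⟩

variable (e : Exec N)

theorem step_of_sched {k : ℕ} {l : Label N} (h : e.sched k = some l) :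
    Step l (e.states k) (e.states (k + 1)) := by
  simpa [h] using e.step k

theorem states_succ_eq_or_step (k : ℕ) :
    e.states (k + 1) = e.states k ∨
      ∃ l, e.sched k = some l ∧ Step l (e.states k) (e.states (k + 1)) := by
  cases h : e.sched k with
  | none => exact Or.inl (by simpa [h] using e.step k)
  | some l => exact Or.inr ⟨l, rfl, e.step_of_sched h⟩

theorem turnInv (k : ℕ) : TurnInv (e.states k) := by
  induction k with
  | zero => simp [TurnInv, e.init, initSt]
  | succ k ih =>
    rcases e.states_succ_eq_or_step k with hk | ⟨l, -, hstep⟩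
    · rwa [hk]
    · exact hstep.turnInv ih

theorem turn_eq_of_enter_cs {j : Fin N} {k : ℕ} (hj : (e.states k).pc j ≠ PPC.cs)
    (hj' : (e.states (k + 1)).pc j = PPC.cs) : (e.states k).turn = some j := by
  rcases e.states_succ_eq_or_step k with hk | ⟨l, -, hstep⟩
  · exact absurd (hk ▸ hj') hj
  · exact hstep.turn_eq_of_enter_cs hj hj'

theorem waitsWithTurn_succ {i : Fin N} {k : ℕ} (hw : WaitsWithTurn i (e.states k))
    (hk : e.sched k ≠ some (Label.proc i)) : WaitsWithTurn i (e.states (k + 1)) := by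
  rcases e.states_succ_eq_or_step k with hk' | ⟨l, hl, hstep⟩
  · rwa [hk']
  · exact hstep.waitsWithTurn (e.turnInv k) hw (by rintro rfl; exact hk hl)

end Exec

end Asym

open Asym in
/-- **Lemma: a process with the turn enters the critical section (asymmetric
algorithm).** In every fair execution, if at some step the coordinator moves
from state 2.1 to state 2.2 (thereby assigning `turn := i`, where `i` is the
coordinator's counter value) while process `i` is in state 2, then process
`i` eventually enters the critical section, and no other process enters the
critical section before it does. -/
theorem asym_process_with_turn_enters {N : ℕ} [NeZero N] (e : Exec N)
    (hfair : e.Fair) (n : ℕ) (i : Fin N)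
    (hsched : e.sched n = some Label.coord)
    (hcpc : (e.states n).cpc = CPC.c21)
    (hp : (e.states n).p = i)
    (hi : (e.states n).pc i = PPC.s2) :
    ∃ m, n < m ∧ (e.states m).pc i = PPC.cs ∧
      ∀ j, j ≠ i → ∀ k, n ≤ k → k < m →
        ¬ ((e.states k).pc j ≠ PPC.cs ∧ (e.states (k + 1)).pc j = PPC.cs) := by
  subst hp
  have hw : WaitsWithTurn (e.states n).p (e.states (n + 1)) :=
    (e.step_of_sched hsched).waitsWithTurn_of_c21 hcpc hi
  obtain ⟨m, hnm, hm, hwaiting⟩ := hfair.exists_sched_of_stable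
    (fun s hs => ⟨_, .p2cs s _ hs.2 hs.1⟩) (fun k => e.waitsWithTurn_succ) hw
  refine ⟨m + 1, by omega, (e.step_of_sched hm).pc_eq_cs_of_s2 (hwaiting m hnm le_rfl).2,
    fun j hji k hnk hkm ⟨hj, hj'⟩ => ?_⟩
  have hturn := e.turn_eq_of_enter_cs hj hj'
  rcases hnk.eq_or_lt with rfl | hlt
  · simp [(e.turnInv n).1 (by simp [hcpc])] at hturn
  · have hturn_i := (hwaiting k hlt (by omega)).1
    exact hji (Option.some_injective _ (hturn.symm.trans hturn_i))
end

section
/- Mutual exclusion for the one-writer asymmetric algorithm: in every reachable global state of the one-writer asymmetric algorithm, at most one process p_i has its program counter at the critical section. -/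
/-!
Model of the asymmetric mutual-exclusion algorithm using only
one-writer/multiple-reader shared variables: `turn` is writable only by the
coordinator.

Process `i` automaton: state 1 --(flag[i]:=WAITING)--> state 2
--(turn = i ⇒)--> critical section --(flag[i]:=REMAINDER)--> state 3
--(turn ≠ i ⇒)--> state 4.

Coordinator automaton (local counter `p`, initially set to 0):
state 1 --(p:=0)--> state 2; state 2 --(flag[p]≠WAITING ⇒)--> state 3;
state 2 --(flag[p]=WAITING ⇒)--> state 2.1 --(turn:=p)--> state 2.2
--(flag[p]=REMAINDER ⇒ turn:=THINKING)--> state 3;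
state 3 --(p:=(p+1) mod N)--> state 2.
-/

namespace Asym1W

inductive Flag
  | remainder | waiting
  deriving DecidableEq

/-- Program counter of a process. -/
inductive PPC
  | s1 | s2 | cs | s3 | s4
  deriving DecidableEq

/-- Program counter of the coordinator. -/
inductive CPC
  | c1 | c2 | c21 | c22 | c3
  deriving DecidableEq

/-- A global state. -/
structure St (N : ℕ) where
  /-- `none` encodes THINKING. -/
  turn : Option (Fin N)
  flag : Fin N → Flag
  pc : Fin N → PPC
  cpc : CPC
  p : Fin N

/-- The initial global state. -/
def initSt (N : ℕ) [NeZero N] : St N where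
  turn := none
  flag := fun _ => .remainder
  pc := fun _ => .s1
  cpc := .c1
  p := 0

/-- Who takes a step: a process or the coordinator. -/
inductive Label (N : ℕ)
  | proc : Fin N → Label N
  | coord

/-- One enabled transition of a single agent. -/
inductive Step {N : ℕ} [NeZero N] : Label N → St N → St N → Prop
  | p12 (s : St N) (i : Fin N) (h : s.pc i = .s1) :
      Step (.proc i) s { s with flag := Function.update s.flag i .waiting,
                                pc := Function.update s.pc i .s2 }
  | p2cs (s : St N) (i : Fin N) (h : s.pc i = .s2) (ht : s.turn = some i) :
      Step (.proc i) s { s with pc := Function.update s.pc i .cs }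
  | pcs3 (s : St N) (i : Fin N) (h : s.pc i = .cs) :
      Step (.proc i) s { s with flag := Function.update s.flag i .remainder,
                                pc := Function.update s.pc i .s3 }
  | p34 (s : St N) (i : Fin N) (h : s.pc i = .s3) (ht : s.turn ≠ some i) :
      Step (.proc i) s { s with pc := Function.update s.pc i .s4 }
  | c12 (s : St N) (h : s.cpc = .c1) :
      Step .coord s { s with p := 0, cpc := .c2 }
  | c23 (s : St N) (h : s.cpc = .c2) (hf : s.flag s.p ≠ .waiting) :
      Step .coord s { s with cpc := .c3 }
  | c2_21 (s : St N) (h : s.cpc = .c2) (hf : s.flag s.p = .waiting) :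
      Step .coord s { s with cpc := .c21 }
  | c21_22 (s : St N) (h : s.cpc = .c21) :
      Step .coord s { s with turn := some s.p, cpc := .c22 }
  | c22_3 (s : St N) (h : s.cpc = .c22) (hf : s.flag s.p = .remainder) :
      Step .coord s { s with turn := none, cpc := .c3 }
  | c3_2 (s : St N) (h : s.cpc = .c3) :
      Step .coord s { s with p := s.p + 1, cpc := .c2 }

/-- An execution: a sequence of global states starting from the initial
state, together with a schedule; at each instant either exactly one agent
takes one of its enabled transitions, or (if `none` is scheduled) the
state stutters. -/
structure Exec (N : ℕ) [NeZero N] where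
  states : ℕ → St N
  sched : ℕ → Option (Label N)
  init : states 0 = initSt N
  step : ∀ n, match sched n with
    | some l => Step l (states n) (states (n + 1))
    | none => states (n + 1) = states n

/-- An agent is enabled if it can take a transition. -/
def Enabled {N : ℕ} [NeZero N] (l : Label N) (s : St N) : Prop :=
  ∃ s', Step l s s'

/-- Weak fairness: an agent whose next transition is continuously enabled
eventually takes it. -/
def Exec.Fair {N : ℕ} [NeZero N] (e : Exec N) : Prop :=
  ∀ l n, (∀ m, n ≤ m → Enabled l (e.states m)) → ∃ m, n ≤ m ∧ e.sched m = some l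

/-- A state is reachable if it occurs in some execution. -/
def Reachable {N : ℕ} [NeZero N] (s : St N) : Prop :=
  ∃ e : Exec N, ∃ n, e.states n = s

variable {N : ℕ}

/-- A process can only enter the CS while the coordinator sits in state 2.2 serving it, and
the coordinator cannot leave 2.2 before that process lowers its flag on exit. -/
structure MutexInv (s : St N) : Prop where
  turn_eq : s.turn = if s.cpc = .c22 then some s.p else none
  flag_eq_waiting : ∀ i, s.pc i = .s2 ∨ s.pc i = .cs → s.flag i = .waiting
  served_of_cs : ∀ i, s.pc i = .cs → s.cpc = .c22 ∧ s.p = i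

theorem MutexInv.eq_of_cs {s : St N} (hs : MutexInv s) {i j : Fin N} (hi : s.pc i = .cs)
    (hj : s.pc j = .cs) : i = j :=
  (hs.served_of_cs i hi).2.symm.trans (hs.served_of_cs j hj).2

variable [NeZero N]

theorem Reachable.induction {P : St N → Prop} (init : P (initSt N))
    (step : ∀ l s s', Step l s s' → P s → P s') {s : St N} (hs : Reachable s) : P s := by
  obtain ⟨e, n, rfl⟩ := hs
  induction n with
  | zero => rwa [e.init]
  | succ n ih =>
    have hn := e.step n
    cases h : e.sched n with
    | some l => rw [h] at hn; exact step l _ _ hn ih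
    | none => rw [h] at hn; rwa [hn]

theorem mutexInv_initSt : MutexInv (initSt N) where
  turn_eq := by simp [initSt]
  flag_eq_waiting := by simp [initSt]
  served_of_cs := by simp [initSt]

theorem MutexInv.step {l : Label N} {s s' : St N} (hstep : Step l s s') (hs : MutexInv s) :
    MutexInv s' := by
  obtain ⟨hturn, hflag, hserved⟩ := hs
  cases hstep with
  | p2cs s i h ht =>
    have hserving : s.cpc = .c22 ∧ s.p = i := by grind
    constructor <;> grind [Function.update_apply]
  | c22_3 s h hf =>
    have hno_cs : ∀ i, s.pc i ≠ .cs := fun i hi => by grind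
    constructor <;> grind
  | _ => constructor <;> grind [Function.update_apply]

end Asym1W

open Asym1W in
/-- **Mutual exclusion for the one-writer asymmetric algorithm.**
In every reachable global state, at most one process is in the
critical-section state. -/
theorem asym1w_mutual_exclusion {N : ℕ} [NeZero N] (s : St N)
    (hs : Reachable s) (i j : Fin N)
    (hi : s.pc i = PPC.cs) (hj : s.pc j = PPC.cs) : i = j :=
  (hs.induction mutexInv_initSt fun _ _ _ => MutexInv.step).eq_of_cs hi hj
end

section
/- For the symmetric algorithm: in every reachable global state, no two distinct processes have their program counters simultaneously at state 3.5.1. -/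
/-!
Model of the symmetric mutual-exclusion algorithm (no coordinator).

Shared variables: `turn ∈ {0,…,N−1, THINKING, FREE}` (initially FREE) and
`flag : Fin N → {REMAINDER, WAITING, CANDIDATE}` (initially all REMAINDER,
`flag[i]` writable only by process `i`).

Entry automaton for process `i` (program-counter states):
* `s1`   : set `flag[i] := WAITING`, go to `s2`;
* `s2`   : wait while `turn = THINKING`; if `turn = FREE` go to `s3`
           (beginning of the candidate phase); if `turn` is a process
           identifier, go to `s4`;
* `s3`   : set `flag[i] := CANDIDATE`, go to `s32` (state 3.2);
* `s32`  : repeat-loop test: if `turn = FREE ∧ flag[i] = CANDIDATE`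
           go to `s33` (state 3.3), otherwise leave the loop to `s37`;
* `s33`  : set `nCandidates := 0`, `minCandidate := −1`, initialize the scan
           counter, go to `s34`;
* `s34`  : scan loop (states 3.4/3.4.1/3.4.2), `j` from `N−1` down to `0`:
           if the scan is over, go to `s35`; otherwise inspect `flag[j]`:
           if it is CANDIDATE go to `s341` else decrement `j`;
* `s341` : set `nCandidates := nCandidates + 1`, `minCandidate := j`,
           decrement `j`, back to `s34`;
* `s35`  : if `turn = FREE ∧ nCandidates = 1` go to `s351` (state 3.5.1),
           otherwise go to `s36`;
* `s351` : set `turn := i`, go to `s352` (state 3.5.2);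
* `s352` : go to `s36`;
* `s36`  : if `turn ≠ FREE ∨ minCandidate < i` set `flag[i] := WAITING`
           (state 3.6); in either case return to the repeat test `s32`;
* `s37`  : after the repeat ends, set `flag[i] := WAITING`, go to `s4`;
* `s4`   : wait until `turn = i`, then enter the critical section `cs`.

Exit automaton for process `i`:
* `cs`   : set `turn := THINKING`, go to `s5` (state 5);
* `s5`   : set `flag[i] := REMAINDER`, `nextTurn := THINKING`, initialize the
           scan counter, go to `s6`;
* `s6`   : loop (states 6/6.1/6.2) with `j` over `i+1,…,N−1,0,…,i−1` while
           `nextTurn = THINKING`: if `flag[j] ≠ REMAINDER` set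
           `nextTurn := j`; when the loop ends go to `s63` (state 6.3);
* `s63`  : if `nextTurn = THINKING` set `turn := FREE` else
           `turn := nextTurn`; go to `s8` (state 8).
-/

namespace Sym

/-- Values of the shared variable `turn` (and of `nextTurn`). -/
inductive Turn (N : ℕ)
  | free
  | thinking
  | id : Fin N → Turn N
  deriving DecidableEq

inductive Flag
  | remainder | waiting | candidate
  deriving DecidableEq

/-- Program counter of a process. -/
inductive PC
  | s1 | s2 | s3 | s32 | s33 | s34 | s341 | s35 | s351 | s352 | s36 | s37
  | s4 | cs | s5 | s6 | s63 | s8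
  deriving DecidableEq

/-- A global state: shared variables plus each process's program counter and
local variables (`cnt` is the loop counter `j`, reused by the candidate scan
and the exit scan). -/
structure St (N : ℕ) where
  turn : Turn N
  flag : Fin N → Flag
  pc : Fin N → PC
  nCand : Fin N → ℕ
  minCand : Fin N → ℤ
  nextTurn : Fin N → Turn N
  cnt : Fin N → ℕ

/-- The initial global state. -/
def initSt (N : ℕ) : St N where
  turn := .free
  flag := fun _ => .remainder
  pc := fun _ => .s1
  nCand := fun _ => 0
  minCand := fun _ => 0
  nextTurn := fun _ => .thinking
  cnt := fun _ => 0

/-- In the exit scan of process `i`, the index examined when the counter is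
`k` is `(i + k + 1) mod N`: the scan order is `i+1, …, N−1, 0, …, i−1`. -/
def nxt {N : ℕ} (i : Fin N) (k : ℕ) : Fin N :=
  ⟨(i.val + k + 1) % N, Nat.mod_lt _ i.pos⟩

/-- One enabled transition of process `i`. -/
inductive Step {N : ℕ} : Fin N → St N → St N → Prop
  | t1 (s : St N) (i : Fin N) (h : s.pc i = .s1) :
      Step i s { s with flag := Function.update s.flag i .waiting,
                        pc := Function.update s.pc i .s2 }
  | t2free (s : St N) (i : Fin N) (h : s.pc i = .s2) (ht : s.turn = .free) :
      Step i s { s with pc := Function.update s.pc i .s3 }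
  | t2id (s : St N) (i j : Fin N) (h : s.pc i = .s2) (ht : s.turn = .id j) :
      Step i s { s with pc := Function.update s.pc i .s4 }
  | t3 (s : St N) (i : Fin N) (h : s.pc i = .s3) :
      Step i s { s with flag := Function.update s.flag i .candidate,
                        pc := Function.update s.pc i .s32 }
  | t32enter (s : St N) (i : Fin N) (h : s.pc i = .s32)
      (ht : s.turn = .free) (hf : s.flag i = .candidate) :
      Step i s { s with pc := Function.update s.pc i .s33 }
  | t32exit (s : St N) (i : Fin N) (h : s.pc i = .s32)
      (hc : ¬ (s.turn = .free ∧ s.flag i = .candidate)) :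
      Step i s { s with pc := Function.update s.pc i .s37 }
  | t33 (s : St N) (i : Fin N) (h : s.pc i = .s33) :
      Step i s { s with nCand := Function.update s.nCand i 0,
                        minCand := Function.update s.minCand i (-1),
                        cnt := Function.update s.cnt i N,
                        pc := Function.update s.pc i .s34 }
  | t34done (s : St N) (i : Fin N) (h : s.pc i = .s34) (hc : s.cnt i = 0) :
      Step i s { s with pc := Function.update s.pc i .s35 }
  | t34cand (s : St N) (i j : Fin N) (h : s.pc i = .s34) (hc : s.cnt i ≠ 0)
      (hj : (j : ℕ) = s.cnt i - 1) (hf : s.flag j = .candidate) :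
      Step i s { s with pc := Function.update s.pc i .s341 }
  | t34nocand (s : St N) (i j : Fin N) (h : s.pc i = .s34) (hc : s.cnt i ≠ 0)
      (hj : (j : ℕ) = s.cnt i - 1) (hf : s.flag j ≠ .candidate) :
      Step i s { s with cnt := Function.update s.cnt i (s.cnt i - 1),
                        pc := Function.update s.pc i .s34 }
  | t341 (s : St N) (i : Fin N) (h : s.pc i = .s341) :
      Step i s { s with nCand := Function.update s.nCand i (s.nCand i + 1),
                        minCand := Function.update s.minCand i ((s.cnt i : ℤ) - 1),
                        cnt := Function.update s.cnt i (s.cnt i - 1),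
                        pc := Function.update s.pc i .s34 }
  | t35yes (s : St N) (i : Fin N) (h : s.pc i = .s35)
      (ht : s.turn = .free) (hn : s.nCand i = 1) :
      Step i s { s with pc := Function.update s.pc i .s351 }
  | t35no (s : St N) (i : Fin N) (h : s.pc i = .s35)
      (hc : ¬ (s.turn = .free ∧ s.nCand i = 1)) :
      Step i s { s with pc := Function.update s.pc i .s36 }
  | t351 (s : St N) (i : Fin N) (h : s.pc i = .s351) :
      Step i s { s with turn := .id i, pc := Function.update s.pc i .s352 }
  | t352 (s : St N) (i : Fin N) (h : s.pc i = .s352) :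
      Step i s { s with pc := Function.update s.pc i .s36 }
  | t36yes (s : St N) (i : Fin N) (h : s.pc i = .s36)
      (hc : s.turn ≠ .free ∨ s.minCand i < (i : ℤ)) :
      Step i s { s with flag := Function.update s.flag i .waiting,
                        pc := Function.update s.pc i .s32 }
  | t36no (s : St N) (i : Fin N) (h : s.pc i = .s36)
      (hc : ¬ (s.turn ≠ .free ∨ s.minCand i < (i : ℤ))) :
      Step i s { s with pc := Function.update s.pc i .s32 }
  | t37 (s : St N) (i : Fin N) (h : s.pc i = .s37) :
      Step i s { s with flag := Function.update s.flag i .waiting,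
                        pc := Function.update s.pc i .s4 }
  | t4 (s : St N) (i : Fin N) (h : s.pc i = .s4) (ht : s.turn = .id i) :
      Step i s { s with pc := Function.update s.pc i .cs }
  | tcs (s : St N) (i : Fin N) (h : s.pc i = .cs) :
      Step i s { s with turn := .thinking, pc := Function.update s.pc i .s5 }
  | t5 (s : St N) (i : Fin N) (h : s.pc i = .s5) :
      Step i s { s with flag := Function.update s.flag i .remainder,
                        nextTurn := Function.update s.nextTurn i .thinking,
                        cnt := Function.update s.cnt i 0,
                        pc := Function.update s.pc i .s6 }
  | t6exit (s : St N) (i : Fin N) (h : s.pc i = .s6)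
      (hc : s.nextTurn i ≠ .thinking ∨ s.cnt i = N - 1) :
      Step i s { s with pc := Function.update s.pc i .s63 }
  | t6found (s : St N) (i : Fin N) (h : s.pc i = .s6)
      (hnt : s.nextTurn i = .thinking) (hcnt : s.cnt i ≠ N - 1)
      (hf : s.flag (nxt i (s.cnt i)) ≠ .remainder) :
      Step i s { s with
        nextTurn := Function.update s.nextTurn i (.id (nxt i (s.cnt i))),
        cnt := Function.update s.cnt i (s.cnt i + 1),
        pc := Function.update s.pc i .s6 }
  | t6notfound (s : St N) (i : Fin N) (h : s.pc i = .s6)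
      (hnt : s.nextTurn i = .thinking) (hcnt : s.cnt i ≠ N - 1)
      (hf : s.flag (nxt i (s.cnt i)) = .remainder) :
      Step i s { s with cnt := Function.update s.cnt i (s.cnt i + 1),
                        pc := Function.update s.pc i .s6 }
  | t63free (s : St N) (i : Fin N) (h : s.pc i = .s63)
      (hn : s.nextTurn i = .thinking) :
      Step i s { s with turn := .free, pc := Function.update s.pc i .s8 }
  | t63id (s : St N) (i b : Fin N) (h : s.pc i = .s63)
      (hn : s.nextTurn i = .id b) :
      Step i s { s with turn := .id b, pc := Function.update s.pc i .s8 }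

/-- An execution: a sequence of global states starting from the initial
state, together with a schedule; at each instant either exactly one process
takes one of its enabled transitions, or (if `none` is scheduled) the state
stutters. -/
structure Exec (N : ℕ) where
  states : ℕ → St N
  sched : ℕ → Option (Fin N)
  init : states 0 = initSt N
  step : ∀ n, match sched n with
    | some i => Step i (states n) (states (n + 1))
    | none => states (n + 1) = states n

/-- A process is enabled if it can take a transition. -/
def Enabled {N : ℕ} (i : Fin N) (s : St N) : Prop :=
  ∃ s', Step i s s'

/-- Weak fairness: a process whose next transition is continuously enabled
eventually takes it. -/
def Exec.Fair {N : ℕ} (e : Exec N) : Prop :=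
  ∀ i n, (∀ m, n ≤ m → Enabled i (e.states m)) → ∃ m, n ≤ m ∧ e.sched m = some i

/-- A state is reachable if it occurs in some execution. -/
def Reachable {N : ℕ} (s : St N) : Prop :=
  ∃ e : Exec N, ∃ n, e.states n = s

/-- The extended critical section: program-counter states in `[CS, 8)`. -/
def ExtCS : PC → Prop := fun p => p = .cs ∨ p = .s5 ∨ p = .s6 ∨ p = .s63

/-- Program-counter states in the interval `[3, 4]`: from entering the
candidate phase up to (and including) waiting at state 4. -/
def In34 : PC → Prop := fun p =>
  p = .s3 ∨ p = .s32 ∨ p = .s33 ∨ p = .s34 ∨ p = .s341 ∨ p = .s35 ∨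
  p = .s351 ∨ p = .s352 ∨ p = .s36 ∨ p = .s37 ∨ p = .s4

/-- Position of `x` in the cyclic order `a+1, …, N−1, 0, …, a−1, a`
starting just after `a` (so `rank a (a+1) = 0` and `rank a a = N−1`). -/
def rank {N : ℕ} (a x : Fin N) : ℕ := (x.val + N - a.val - 1) % N

end Sym

/-!
In the scan phase (3.3 to 3.5.2) a process's flag is CANDIDATE, and a process at 3.5.1 has
counted exactly one candidate, itself. If two scanning processes have each read the other's
flag, the later of the two reads found the other process already CANDIDATE, so one of them has
counted a candidate besides itself; hence they cannot both be at 3.5.1. A step changes only the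
local components of the moving process, so this pairwise invariant is checked transition by
transition for the moving process against each other one.
-/

namespace Sym

variable {N : ℕ}

structure LocalState where
  pc : PC
  flag : Flag
  cnt : ℕ
  nCand : ℕ

def St.loc (s : St N) (i : Fin N) : LocalState := ⟨s.pc i, s.flag i, s.cnt i, s.nCand i⟩

def InScan (p : PC) : Prop :=
  p = .s33 ∨ p = .s34 ∨ p = .s341 ∨ p = .s35 ∨ p = .s351 ∨ p = .s352

namespace LocalState

/-- At `s341` the flag of index `cnt - 1` has been inspected but not yet counted, so that
index does not count as read yet. -/
def HasRead (l : LocalState) (m : ℕ) : Prop :=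
  ((l.pc = .s34 ∨ l.pc = .s341) ∧ l.cnt ≤ m) ∨ l.pc = .s35 ∨ l.pc = .s351 ∨ l.pc = .s352

instance (l : LocalState) (m : ℕ) : Decidable (l.HasRead m) := by
  unfold HasRead; infer_instance

def selfCount (l : LocalState) (i : ℕ) : ℕ := if l.HasRead i then 1 else 0

structure Valid (l : LocalState) (i : ℕ) : Prop where
  flag_eq_candidate : InScan l.pc → l.flag = .candidate
  one_le_nCand : l.HasRead i → 1 ≤ l.nCand
  nCand_eq_one : l.pc = .s351 → l.nCand = 1

/-- Of two scanning processes that have read each other's flag, the later reader saw the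
other one CANDIDATE, so it has counted a candidate besides itself. -/
def PairInv (la lb : LocalState) (a b : ℕ) : Prop :=
  InScan la.pc → InScan lb.pc → la.HasRead b → lb.HasRead a →
    la.selfCount a < la.nCand ∨ lb.selfCount b < lb.nCand

theorem hasRead_iff_cnt_le {l : LocalState} (hpc : l.pc = .s34 ∨ l.pc = .s341) {m : ℕ} :
    l.HasRead m ↔ l.cnt ≤ m := by
  rcases hpc with hpc | hpc <;> simp [HasRead, hpc]

theorem selfCount_le_one (l : LocalState) (i : ℕ) : l.selfCount i ≤ 1 := by
  unfold selfCount; split <;> simp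

theorem hasRead_of_pc_s351 {l : LocalState} (hpc : l.pc = .s351) (m : ℕ) : l.HasRead m := by
  simp [HasRead, hpc]

theorem Valid.selfCount_eq_nCand {l : LocalState} {i : ℕ} (hv : l.Valid i) (hpc : l.pc = .s351) :
    l.selfCount i = l.nCand := by
  simp [selfCount, hasRead_of_pc_s351 hpc, hv.nCand_eq_one hpc]

theorem PairInv.symm {la lb : LocalState} {a b : ℕ} (h : PairInv la lb a b) :
    PairInv lb la b a :=
  fun ha hb hab hba => (h hb ha hba hab).symm

theorem PairInv.of_not_inScan {la lb : LocalState} {a b : ℕ} (h : ¬ InScan la.pc) :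
    PairInv la lb a b :=
  fun ha => absurd ha h

theorem PairInv.of_not_hasRead {la lb : LocalState} {a b : ℕ} (h : ¬ la.HasRead b) :
    PairInv la lb a b :=
  fun _ _ hab => absurd hab h

theorem PairInv.mono_left {la la' lb : LocalState} {a b : ℕ} (h : PairInv la lb a b)
    (hscan : InScan la.pc) (hself : la'.HasRead a ↔ la.HasRead a)
    (hother : InScan lb.pc → la'.HasRead b → la.HasRead b) (hn : la.nCand ≤ la'.nCand) :
    PairInv la' lb a b := by
  intro _ hb hab hba
  have hcount : la'.selfCount a = la.selfCount a := by simp only [selfCount, hself]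
  rw [hcount]
  exact (h hscan hb (hother hb hab) hba).imp_left (fun h => h.trans_le hn)

theorem hasRead_decCnt_iff {l : LocalState} (hpc : l.pc = .s34) {m : ℕ} (hm : l.cnt - 1 ≠ m) :
    ({ l with cnt := l.cnt - 1 } : LocalState).HasRead m ↔ l.HasRead m := by
  simp only [HasRead, hpc, true_and, reduceCtorEq, or_false]
  omega

theorem PairInv.countCandidate {la lb : LocalState} {a b : ℕ} (h : PairInv la lb a b)
    (hv : la.Valid a) (hpc : la.pc = .s341) (hab : a ≠ b) :
    PairInv { la with pc := .s34, cnt := la.cnt - 1, nCand := la.nCand + 1 } lb a b := by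
  intro _ hb hread_b hba
  have hread : ∀ m, la.HasRead m ↔ la.cnt ≤ m := fun _ => hasRead_iff_cnt_le (Or.inr hpc)
  have hread' : ∀ m, ({ la with pc := .s34, cnt := la.cnt - 1, nCand := la.nCand + 1 } :
      LocalState).HasRead m ↔ la.cnt - 1 ≤ m := fun _ => hasRead_iff_cnt_le (Or.inl rfl)
  have hle := selfCount_le_one { la with pc := .s34, cnt := la.cnt - 1, nCand := la.nCand + 1 } a
  rw [hread'] at hread_b
  dsimp only at hle ⊢
  by_cases hread_a : la.cnt ≤ a
  · have := hv.one_le_nCand ((hread a).2 hread_a)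
    omega
  have hzero : la.selfCount a = 0 := by simp [selfCount, hread, hread_a]
  by_cases hread_b' : la.cnt ≤ b
  · have := h (by simp [InScan, hpc]) hb ((hread b).2 hread_b') hba
    omega
  · left
    simp only [selfCount, hread']
    split_ifs <;> omega

end LocalState

open LocalState

structure Inv (s : St N) : Prop where
  valid : ∀ i, (s.loc i).Valid i
  pair : ∀ a b, a ≠ b → PairInv (s.loc a) (s.loc b) a b

theorem inv_initSt : Inv (initSt N) := by
  refine ⟨fun i => ⟨?_, ?_, ?_⟩, fun a b _ => ?_⟩ <;>
    simp [St.loc, initSt, PairInv, InScan, HasRead, selfCount]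

theorem Step.loc_of_ne {i k : Fin N} {s s' : St N} (hst : Step i s s') (hk : k ≠ i) :
    s'.loc k = s.loc k := by
  cases hst <;> simp [St.loc, Function.update_of_ne hk]

theorem Step.valid {i : Fin N} {s s' : St N} (hst : Step i s s') (h : (s.loc i).Valid i) :
    (s'.loc i).Valid i := by
  cases hst with
  | t34nocand _ _ j hpc _ hj hflag_j =>
    have hflag_i : s.flag i = .candidate := h.flag_eq_candidate (by simp [St.loc, InScan, hpc])
    have hskip : s.cnt i - 1 ≠ i := fun hji => hflag_j (by rwa [Fin.ext (hj.trans hji)])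
    refine ⟨fun _ => by simpa [St.loc] using hflag_i, fun hread => h.one_le_nCand ?_,
      by simp [St.loc]⟩
    have hread' : ({ s.loc i with cnt := s.cnt i - 1 } : LocalState).HasRead i := by
      simpa [St.loc, HasRead, hpc] using hread
    exact (hasRead_decCnt_iff (l := s.loc i) hpc hskip).1 hread'
  | _ =>
    obtain ⟨_, _, _⟩ := h
    refine ⟨?_, ?_, ?_⟩ <;> simp_all [St.loc, InScan, HasRead]

theorem Step.pairInv {i b : Fin N} {s s' : St N} (hst : Step i s s') (hbi : b ≠ i)
    (hvi : (s.loc i).Valid i) (hvb : (s.loc b).Valid b)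
    (h : PairInv (s.loc i) (s.loc b) i b) : PairInv (s'.loc i) (s.loc b) i b := by
  cases hst with
  | t32enter _ _ _ => exact PairInv.of_not_hasRead (by simp [St.loc, HasRead])
  | t33 _ _ _ => exact PairInv.of_not_hasRead (by simp [St.loc, HasRead])
  | t34done _ _ hpc hcnt =>
    exact h.mono_left (by simp [St.loc, InScan, hpc]) (by simp [St.loc, HasRead, hpc, hcnt])
      (fun _ _ => by simp [St.loc, HasRead, hpc, hcnt]) le_rfl
  | t34cand _ _ _ hpc | t35yes _ _ hpc | t351 _ _ hpc =>
    exact h.mono_left (by simp [St.loc, InScan, hpc]) (by simp [St.loc, HasRead, hpc])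
      (fun _ => by simp [St.loc, HasRead, hpc]) le_rfl
  | t34nocand _ _ j hpc _ hj hflag_j =>
    have hskip (k : Fin N) (hk : s.flag k = .candidate) : s.cnt i - 1 ≠ k := fun hjk =>
      hflag_j (by rwa [Fin.ext (hj.trans hjk)])
    have hflag_i := hvi.flag_eq_candidate (by simp [St.loc, InScan, hpc])
    convert h.mono_left (la' := { s.loc i with cnt := s.cnt i - 1 })
      (by simp [St.loc, InScan, hpc]) (hasRead_decCnt_iff hpc (hskip i hflag_i))
      (fun hb => (hasRead_decCnt_iff hpc (hskip b (hvb.flag_eq_candidate hb))).1) le_rfl using 1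
    simp [St.loc, hpc]
  | t341 _ _ hpc =>
    convert h.countCandidate hvi hpc (Fin.val_ne_of_ne hbi.symm) using 1
    simp [St.loc]
  | _ => exact PairInv.of_not_inScan (by simp [St.loc, InScan])

theorem Inv.step {i : Fin N} {s s' : St N} (h : Inv s) (hst : Step i s s') : Inv s' := by
  refine ⟨fun k => ?_, fun a b hab => ?_⟩
  · by_cases hk : k = i
    · subst hk
      exact hst.valid (h.valid k)
    · rw [hst.loc_of_ne hk]
      exact h.valid k
  · by_cases ha : a = i
    · subst ha
      rw [hst.loc_of_ne hab.symm]
      exact hst.pairInv hab.symm (h.valid a) (h.valid b) (h.pair a b hab)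
    by_cases hb : b = i
    · subst hb
      rw [hst.loc_of_ne ha]
      exact (hst.pairInv ha (h.valid b) (h.valid a) (h.pair b a (Ne.symm hab))).symm
    · rw [hst.loc_of_ne ha, hst.loc_of_ne hb]
      exact h.pair a b hab

theorem Reachable.inv {s : St N} (hs : Reachable s) : Inv s := by
  obtain ⟨e, n, rfl⟩ := hs
  induction n with
  | zero => exact e.init ▸ inv_initSt
  | succ n ih =>
    have hstep := e.step n
    cases hsched : e.sched n with
    | none => simp only [hsched] at hstep; exact hstep ▸ ih
    | some k => simp only [hsched] at hstep; exact ih.step hstep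

end Sym

open Sym in
/-- **Lemma: no two processes are in state 3.5.1 simultaneously
(symmetric algorithm).** In every reachable global state, no two distinct
processes have their program counters at state 3.5.1. -/
theorem sym_no_two_in_351 {N : ℕ} (s : St N) (hs : Reachable s)
    (i j : Fin N) (hi : s.pc i = PC.s351) (hj : s.pc j = PC.s351) : i = j := by
  by_contra hne
  have hinv := hs.inv
  have hscan (k : Fin N) (hk : s.pc k = .s351) : InScan (s.loc k).pc := by simp [St.loc, InScan, hk]
  have hpair := hinv.pair i j hne (hscan i hi) (hscan j hj)
    (LocalState.hasRead_of_pc_s351 hi j) (LocalState.hasRead_of_pc_s351 hj i)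
  rw [(hinv.valid i).selfCount_eq_nCand hi, (hinv.valid j).selfCount_eq_nCand hj] at hpair
  exact hpair.elim (lt_irrefl _) (lt_irrefl _)
end

section
/- Mutual exclusion for the symmetric algorithm (extended form): in every reachable global state, no two distinct processes are simultaneously in the extended critical section, i.e., no two processes both have their program counters in [CS, 8). -/
/-!
A process in 3.5.1, 3.5.2 or `[CS, 8)` sees a value of `turn` fixed by its state (FREE, its own
identifier, THINKING), and at most one process is in these states at all. The only transition
that could break this uniqueness is a process passing 3.5 with `turn = FREE` and
`nCandidates = 1` while another waits in 3.5.1. A second invariant excludes it: of two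
candidates that have each inspected the other's flag, the later one found the earlier one
CANDIDATE besides itself, so one of them counts at least two candidates.
-/

namespace Sym

variable {N : ℕ}

theorem reachable_induction {P : St N → Prop} (hinit : P (initSt N))
    (hstep : ∀ i s s', P s → Step i s s' → P s') {s : St N} (hs : Reachable s) : P s := by
  obtain ⟨e, n, rfl⟩ := hs
  induction n with
  | zero => rwa [e.init]
  | succ n ih =>
    have h := e.step n
    rcases hi : e.sched n with _ | i <;> rw [hi] at h
    · rwa [h]
    · exact hstep i _ _ ih h

theorem Step.local_eq {i x : Fin N} {s s' : St N} (h : Step i s s') (hx : x ≠ i) :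
    s'.pc x = s.pc x ∧ s'.flag x = s.flag x ∧ s'.nCand x = s.nCand x ∧
      s'.cnt x = s.cnt x := by
  cases h <;> simp [Function.update_of_ne hx]

def Scanning (p : PC) : Prop := p = .s34 ∨ p = .s341 ∨ p = .s35 ∨ p = .s351 ∨ p = .s352

/-- A scanner at `p` with counter `c` has inspected `flag[j]`; at 3.4.1 it has inspected
`flag[c - 1]` without having counted it yet. -/
def Inspected (p : PC) (c j : ℕ) : Prop :=
  (p = .s34 ∧ c ≤ j) ∨ (p = .s341 ∧ c ≤ j + 1) ∨ p = .s35 ∨ p = .s351 ∨ p = .s352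

/-- A lower bound on the final `nCandidates` of scanner `i`: the current count `n`, the
increment pending at 3.4.1, and its own index if not yet inspected (its own flag stays
CANDIDATE). -/
def countBound (p : PC) (n c i : ℕ) : ℕ :=
  match p with
  | .s34 => n + if c ≤ i then 0 else 1
  | .s341 => n + 1 + if c ≤ i + 1 then 0 else 1
  | _ => n

theorem Inspected.scanning {p : PC} {c j : ℕ} (h : Inspected p c j) : Scanning p := by
  rcases h with ⟨rfl, -⟩ | ⟨rfl, -⟩ | rfl | rfl | rfl <;> simp [Scanning]

namespace St

def bound (s : St N) (x : Fin N) : ℕ := countBound (s.pc x) (s.nCand x) (s.cnt x) x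

def Inspects (s : St N) (x y : Fin N) : Prop := Inspected (s.pc x) (s.cnt x) y

end St

theorem Step.bound_eq {i x : Fin N} {s s' : St N} (h : Step i s s') (hx : x ≠ i) :
    s'.bound x = s.bound x := by
  obtain ⟨hpc, -, hn, hc⟩ := h.local_eq hx
  simp only [St.bound, hpc, hn, hc]

theorem Step.inspects_iff {i x y : Fin N} {s s' : St N} (h : Step i s s') (hx : x ≠ i) :
    s'.Inspects x y ↔ s.Inspects x y := by
  obtain ⟨hpc, -, -, hc⟩ := h.local_eq hx
  simp only [St.Inspects, hpc, hc]

structure ScanInv (s : St N) : Prop where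
  flag_eq_candidate : ∀ x, s.pc x = .s33 ∨ Scanning (s.pc x) → s.flag x = .candidate
  one_le_bound : ∀ x, Scanning (s.pc x) → 1 ≤ s.bound x
  nCand_eq_one : ∀ x, s.pc x = .s351 → s.nCand x = 1
  two_le_bound : ∀ x y, x ≠ y → s.Inspects x y → s.Inspects y x →
    2 ≤ s.bound x ∨ 2 ≤ s.bound y

namespace ScanInv

variable {s s' : St N} {i : Fin N}

theorem init : ScanInv (initSt N) := by
  constructor <;> simp [initSt, Scanning, St.Inspects, Inspected]

theorem nCand_ne_one (hS : ScanInv s) (hi : s.pc i = .s35) {x : Fin N} (hx : s.pc x = .s351)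
    (hxi : x ≠ i) : s.nCand i ≠ 1 := by
  have h2 := hS.two_le_bound i x hxi.symm (by simp [St.Inspects, Inspected, hi])
    (by simp [St.Inspects, Inspected, hx])
  simp only [St.bound, hi, hx, countBound, hS.nCand_eq_one x hx] at h2
  omega

theorem ne_of_flag_ne_candidate (hS : ScanInv s) (hi : Scanning (s.pc i)) {j : Fin N}
    (hj : s.flag j ≠ .candidate) : j ≠ i := by
  rintro rfl
  exact hj (hS.flag_eq_candidate j (.inr hi))

theorem flag_eq_candidate_step (hS : ScanInv s) (hst : Step i s s')
    (h : s'.pc i = .s33 ∨ Scanning (s'.pc i)) : s'.flag i = .candidate := by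
  cases hst <;> simp only [Function.update_self] at h ⊢
  all_goals first
    | assumption
    | (simp [Scanning] at h; done)
    | exact hS.flag_eq_candidate _ (by simp [Scanning, *])

theorem nCand_eq_one_step (hst : Step i s s') (h : s'.pc i = .s351) : s'.nCand i = 1 := by
  cases hst <;> simp_all

theorem one_le_bound_step (hS : ScanInv s) (hst : Step i s s') (h : Scanning (s'.pc i)) :
    1 ≤ s'.bound i := by
  have old (hpc : Scanning (s.pc i)) := hS.one_le_bound i hpc
  cases hst with
  | t33 => simp [St.bound, countBound, Nat.not_le.mpr i.isLt]
  | t34done s i hpc hc => simpa [St.bound, countBound, Scanning, hpc, hc] using old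
  | t34cand => simp only [St.bound, countBound, Function.update_self]; omega
  | t34nocand s i j hpc hc hj hf =>
    have hji : (j : ℕ) ≠ i :=
      Fin.val_ne_of_ne (hS.ne_of_flag_ne_candidate (by simp [Scanning, hpc]) hf)
    have := old (by simp [Scanning, hpc])
    simp only [St.bound, countBound, hpc, Function.update_self] at this ⊢
    split_ifs at * <;> omega
  | t341 s i hpc =>
    have := old (by simp [Scanning, hpc])
    simp only [St.bound, countBound, hpc, Function.update_self] at this ⊢
    split_ifs at * <;> omega
  | t35yes s i hpc => simpa [St.bound, countBound, Scanning, hpc] using old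
  | t351 s i hpc => simpa [St.bound, countBound, Scanning, hpc] using old
  | _ => simp [Scanning] at h

theorem two_le_bound_step (hS : ScanInv s) (hst : Step i s s') {y : Fin N} (hyi : y ≠ i)
    (hiy : s'.Inspects i y) (hyi' : s.Inspects y i) : 2 ≤ s'.bound i ∨ 2 ≤ s.bound y := by
  have old (hiy : s.Inspects i y) (hmono : s.bound i ≤ s'.bound i) :
      2 ≤ s'.bound i ∨ 2 ≤ s.bound y :=
    (hS.two_le_bound i y hyi.symm hiy hyi').imp_left (le_trans · hmono)
  cases hst with
  | t33 s i hpc =>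
    simp [St.Inspects, Inspected] at hiy
    omega
  | t34done s i hpc hc =>
    exact old (by simp [St.Inspects, Inspected, hpc, hc])
      (by simp [St.bound, countBound, hpc, hc])
  | t34cand s i j hpc hc hj hf =>
    simp [St.Inspects, Inspected] at hiy
    have hyi : (y : ℕ) ≠ i := Fin.val_ne_of_ne hyi
    by_cases hcy : s.cnt i ≤ y
    · refine old (by simp [St.Inspects, Inspected, hpc, hcy]) ?_
      simp only [St.bound, countBound, hpc, Function.update_self]
      split_ifs <;> omega
    · -- `i` has just found `y`'s flag CANDIDATE, and its own is counted or still to come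
      have := hS.one_le_bound i (by simp [Scanning, hpc])
      simp only [St.bound, countBound, hpc, Function.update_self] at this ⊢
      left
      split_ifs at * <;> omega
  | t34nocand s i j hpc hc hj hf =>
    simp [St.Inspects, Inspected] at hiy
    have hji : (j : ℕ) ≠ i :=
      Fin.val_ne_of_ne (hS.ne_of_flag_ne_candidate (by simp [Scanning, hpc]) hf)
    by_cases hcy : s.cnt i ≤ y
    · refine old (by simp [St.Inspects, Inspected, hpc, hcy]) ?_
      simp only [St.bound, countBound, hpc, Function.update_self]
      split_ifs <;> omega
    · have hjy : j = y := Fin.ext (by omega)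
      subst hjy
      exact absurd (hS.flag_eq_candidate j (.inr hyi'.scanning)) hf
  | t341 s i hpc =>
    simp [St.Inspects, Inspected] at hiy
    refine old (by simp [St.Inspects, Inspected, hpc]; omega) ?_
    simp only [St.bound, countBound, hpc, Function.update_self]
    split_ifs <;> omega
  | t35yes s i hpc =>
    exact old (by simp [St.Inspects, Inspected, hpc]) (by simp [St.bound, countBound, hpc])
  | t351 s i hpc =>
    exact old (by simp [St.Inspects, Inspected, hpc]) (by simp [St.bound, countBound, hpc])
  | _ => simp [St.Inspects, Inspected] at hiy

theorem step (hS : ScanInv s) (hst : Step i s s') : ScanInv s' where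
  flag_eq_candidate x hx := by
    rcases eq_or_ne x i with rfl | hxi
    · exact hS.flag_eq_candidate_step hst hx
    obtain ⟨hpc, hflag, -, -⟩ := hst.local_eq hxi
    rw [hpc] at hx
    rw [hflag]
    exact hS.flag_eq_candidate x hx
  one_le_bound x hx := by
    rcases eq_or_ne x i with rfl | hxi
    · exact hS.one_le_bound_step hst hx
    rw [(hst.local_eq hxi).1] at hx
    rw [hst.bound_eq hxi]
    exact hS.one_le_bound x hx
  nCand_eq_one x hx := by
    rcases eq_or_ne x i with rfl | hxi
    · exact nCand_eq_one_step hst hx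
    obtain ⟨hpc, -, hn, -⟩ := hst.local_eq hxi
    rw [hpc] at hx
    rw [hn]
    exact hS.nCand_eq_one x hx
  two_le_bound x y hxy hx hy := by
    rcases eq_or_ne x i with rfl | hxi
    · rw [hst.inspects_iff hxy.symm] at hy
      rw [hst.bound_eq hxy.symm]
      exact hS.two_le_bound_step hst hxy.symm hx hy
    rcases eq_or_ne y i with rfl | hyi
    · rw [hst.inspects_iff hxy] at hx
      rw [hst.bound_eq hxy]
      exact (hS.two_le_bound_step hst hxy hy hx).symm
    rw [hst.inspects_iff hxi] at hx
    rw [hst.inspects_iff hyi] at hy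
    rw [hst.bound_eq hxi, hst.bound_eq hyi]
    exact hS.two_le_bound x y hxy hx hy

end ScanInv

def Guarded (p : PC) : Prop := ExtCS p ∨ p = .s351 ∨ p = .s352

def TurnOk (x : Fin N) (t : Turn N) : PC → Prop
  | .cs | .s352 => t = .id x
  | .s5 | .s6 | .s63 => t = .thinking
  | .s351 => t = .free
  | _ => True

theorem turnOk_of_not_guarded {p : PC} (x : Fin N) (t : Turn N) (h : ¬ Guarded p) :
    TurnOk x t p := by
  cases p <;> simp_all [Guarded, ExtCS, TurnOk]

structure TurnInv (t : Turn N) (pc : Fin N → PC) : Prop where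
  turnOk : ∀ x, TurnOk x t (pc x)
  guarded_unique : ∀ x y, Guarded (pc x) → Guarded (pc y) → x = y

namespace TurnInv

variable {t : Turn N} {pc : Fin N → PC} {i : Fin N}

theorem init : TurnInv (initSt N).turn (initSt N).pc where
  turnOk _ := trivial
  guarded_unique x _ hx := by simp [initSt, Guarded, ExtCS] at hx

theorem not_guarded_of_guarded (hT : TurnInv t pc) (hi : Guarded (pc i)) :
    ∀ x ≠ i, ¬ Guarded (pc x) :=
  fun x hxi hx => hxi (hT.guarded_unique x i hx hi)

theorem not_guarded_of_turn_eq_id (hT : TurnInv t pc) (ht : t = .id i) :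
    ∀ x ≠ i, ¬ Guarded (pc x) := by
  intro x hxi hx
  have hok := hT.turnOk x
  rw [ht] at hok
  rcases hx with (hx | hx | hx | hx) | hx | hx <;> simp [hx, TurnOk] at hok
  all_goals exact hxi hok.symm

theorem pc_eq_s351_of_turn_eq_free (hT : TurnInv t pc) (ht : t = .free) {x : Fin N}
    (hx : Guarded (pc x)) : pc x = .s351 := by
  have hok := hT.turnOk x
  rw [ht] at hok
  rcases hx with (hx | hx | hx | hx) | hx | hx <;> simp [hx, TurnOk] at hok ⊢

theorem update {t' : Turn N} {b : PC} (hT : TurnInv t pc) (hb : TurnOk i t' b)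
    (hturn : t' = t ∨ Guarded (pc i)) (hexcl : Guarded b → ∀ x ≠ i, ¬ Guarded (pc x)) :
    TurnInv t' (Function.update pc i b) where
  turnOk x := by
    rcases eq_or_ne x i with rfl | hxi
    · simpa using hb
    rw [Function.update_of_ne hxi]
    rcases hturn with rfl | hi
    · exact hT.turnOk x
    · exact turnOk_of_not_guarded x t' (hT.not_guarded_of_guarded hi x hxi)
  guarded_unique x y hx hy := by
    rcases eq_or_ne x i with rfl | hxi <;> rcases eq_or_ne y x with rfl | hyx
    · rfl
    · rw [Function.update_self] at hx
      rw [Function.update_of_ne hyx] at hy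
      exact absurd hy (hexcl hx y hyx)
    · rfl
    rcases eq_or_ne y i with rfl | hyi
    · rw [Function.update_self] at hy
      rw [Function.update_of_ne hxi] at hx
      exact absurd hx (hexcl hy x hxi)
    · rw [Function.update_of_ne hxi] at hx
      rw [Function.update_of_ne hyi] at hy
      exact hT.guarded_unique x y hx hy

theorem step {s s' : St N} (hT : TurnInv s.turn s.pc) (hS : ScanInv s) (hst : Step i s s') :
    TurnInv s'.turn s'.pc := by
  have exiting (hpc : s.pc i = .s5 ∨ s.pc i = .s6) : TurnOk i s.turn .s6 := by
    have := hT.turnOk i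
    rcases hpc with hpc | hpc <;> simpa [hpc, TurnOk] using this
  have guarded {p : PC} (hpc : s.pc i = p) (hp : Guarded p) : Guarded (s.pc i) := hpc ▸ hp
  cases hst with
  | t35yes s i hpc ht hn =>
    refine hT.update ht (.inl rfl) fun _ x hxi hx => ?_
    exact hS.nCand_ne_one hpc (hT.pc_eq_s351_of_turn_eq_free ht hx) hxi hn
  | t351 s i hpc =>
    have hi := guarded hpc (by simp [Guarded])
    exact hT.update rfl (.inr hi) fun _ => hT.not_guarded_of_guarded hi
  | t4 s i hpc ht => exact hT.update ht (.inl rfl) fun _ => hT.not_guarded_of_turn_eq_id ht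
  | tcs s i hpc =>
    have hi := guarded hpc (by simp [Guarded, ExtCS])
    exact hT.update rfl (.inr hi) fun _ => hT.not_guarded_of_guarded hi
  | t5 s i hpc =>
    exact hT.update (exiting (.inl hpc)) (.inl rfl)
      fun _ => hT.not_guarded_of_guarded (guarded hpc (by simp [Guarded, ExtCS]))
  | t6exit s i hpc | t6found s i hpc | t6notfound s i hpc =>
    exact hT.update (exiting (.inr hpc)) (.inl rfl)
      fun _ => hT.not_guarded_of_guarded (guarded hpc (by simp [Guarded, ExtCS]))
  | t63free s i hpc | t63id s i _ hpc =>
    exact hT.update trivial (.inr (guarded hpc (by simp [Guarded, ExtCS])))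
      (by simp [Guarded, ExtCS])
  | _ => exact hT.update trivial (.inl rfl) (by simp [Guarded, ExtCS])

end TurnInv

end Sym

open Sym in
/-- **Mutual exclusion for the symmetric algorithm (extended form).**
In every reachable global state, no two distinct processes are
simultaneously in the extended critical section `[CS, 8)`. -/
theorem sym_mutual_exclusion_extended {N : ℕ} (s : St N) (hs : Reachable s)
    (i j : Fin N) (hi : ExtCS (s.pc i)) (hj : ExtCS (s.pc j)) : i = j := by
  obtain ⟨-, hT⟩ := reachable_induction (P := fun s => ScanInv s ∧ TurnInv s.turn s.pc)
    ⟨ScanInv.init, TurnInv.init⟩ (fun _ _ _ ⟨hS, hT⟩ hst => ⟨hS.step hst, hT.step hS hst⟩) hs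
  exact hT.guarded_unique i j (.inl hi) (.inl hj)
end

section
/- For the symmetric algorithm: in every execution, if at some step the shared variable turn is assigned the value a (either by process a itself at state 3.5.2, or by some process setting turn:=nextTurn=a when moving to state 8), then no process changes the value of turn again before process a enters the critical section. -/
/-!
Three invariants hold in every reachable state. (1) A process between states 3.3 and 3.6
has `flag = CANDIDATE`. (2) If two processes in their candidate scan have each already
examined the other's index, one of them has counted a candidate other than itself: the
one that started scanning later saw the other's flag set. Since a process reaching 3.5.1
has counted exactly one candidate, at most one process is at 3.5.1 at any time.
(3) Relating `turn` to the program counters: a process at 3.5.1 sees `turn = FREE`, one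
in the CS sees `turn` equal to itself, one at states 5 to 6.3 sees `turn = THINKING`, and
at most one process is in the extended critical section.

By (3), while `turn = a` no process is at 3.5.1 or at 6.3, and only `a` can be in the CS,
so the only transitions that write `turn` are disabled until `a` enters the CS.
-/

namespace Sym

variable {N : ℕ} {i : Fin N} {s s' : St N}

def CandSt (p : PC) : Prop :=
  p = .s33 ∨ p = .s34 ∨ p = .s341 ∨ p = .s35 ∨ p = .s351 ∨ p = .s352 ∨ p = .s36

def ScanSt (p : PC) : Prop := p = .s34 ∨ p = .s341 ∨ p = .s35 ∨ p = .s351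

theorem ScanSt.candSt {p : PC} (h : ScanSt p) : CandSt p := by
  rcases h with h | h | h | h <;> simp [CandSt, h]

/- During its scan, `q` has examined exactly the indices `≥ scanLow s q`. At `s341` the
index `cnt q - 1` has been examined but its increment of `nCandidates` is still pending;
`seenCount` includes it. -/
def scanLow (s : St N) (q : Fin N) : ℕ :=
  if s.pc q = .s34 then s.cnt q else if s.pc q = .s341 then s.cnt q - 1 else 0

def seenCount (s : St N) (q : Fin N) : ℕ :=
  s.nCand q + if s.pc q = .s341 then 1 else 0

def selfCount (s : St N) (q : Fin N) : ℕ := if scanLow s q ≤ q then 1 else 0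

def CountedOther (s : St N) (q : Fin N) : Prop := selfCount s q + 1 ≤ seenCount s q

theorem Step.pc_of_ne (h : Step i s s') {q : Fin N} (hq : q ≠ i) : s'.pc q = s.pc q := by
  cases h <;> simp [Function.update_of_ne hq]

theorem Step.flag_of_ne (h : Step i s s') {q : Fin N} (hq : q ≠ i) :
    s'.flag q = s.flag q := by
  cases h <;> simp [Function.update_of_ne hq]

theorem Step.scanLow_of_ne (h : Step i s s') {q : Fin N} (hq : q ≠ i) :
    scanLow s' q = scanLow s q := by
  cases h <;> simp [scanLow, Function.update_of_ne hq]

theorem Step.seenCount_of_ne (h : Step i s s') {q : Fin N} (hq : q ≠ i) :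
    seenCount s' q = seenCount s q := by
  cases h <;> simp [seenCount, Function.update_of_ne hq]

theorem Step.countedOther_iff_of_ne (h : Step i s s') {q : Fin N} (hq : q ≠ i) :
    CountedOther s' q ↔ CountedOther s q := by
  simp only [CountedOther, selfCount, h.scanLow_of_ne hq, h.seenCount_of_ne hq]

def CandFlagInv (s : St N) : Prop := ∀ q, CandSt (s.pc q) → s.flag q = .candidate

theorem CandFlagInv.step (hf : CandFlagInv s) (h : Step i s s') : CandFlagInv s' := by
  intro q hq
  rcases eq_or_ne q i with rfl | hqi
  · cases h <;> simp [CandSt] at hq ⊢ <;>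
      first | assumption | exact hf q (by simp [CandSt, *])
  · rw [h.flag_of_ne hqi]
    exact hf q (h.pc_of_ne hqi ▸ hq)

structure CountInv (s : St N) : Prop where
  self_le_seenCount : ∀ q, ScanSt (s.pc q) → selfCount s q ≤ seenCount s q
  countedOther_of_mutual : ∀ q r, q ≠ r → ScanSt (s.pc q) → ScanSt (s.pc r) →
    scanLow s q ≤ r → scanLow s r ≤ q → CountedOther s q ∨ CountedOther s r
  seenCount_of_s351 : ∀ q, s.pc q = .s351 → seenCount s q = 1

theorem CountInv.eq_of_s351 (hc : CountInv s) {q r : Fin N} (hq : s.pc q = .s351)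
    (hr : s.pc r = .s351) : q = r := by
  by_contra hqr
  have hlow : ∀ p : Fin N, s.pc p = .s351 → scanLow s p = 0 := fun p hp => by
    simp [scanLow, hp]
  rcases hc.countedOther_of_mutual q r hqr (by simp [ScanSt, hq]) (by simp [ScanSt, hr])
      (by simp [hlow q hq]) (by simp [hlow r hr]) with h | h <;>
    simp [CountedOther, selfCount, hlow _ hq, hlow _ hr, hc.seenCount_of_s351 _ hq,
      hc.seenCount_of_s351 _ hr] at h

theorem CountInv.of_step (hc : CountInv s) (h : Step i s s')
    (hself : ScanSt (s'.pc i) → selfCount s' i ≤ seenCount s' i)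
    (hpair : ∀ r, r ≠ i → ScanSt (s'.pc i) → ScanSt (s.pc r) →
      scanLow s' i ≤ r → scanLow s r ≤ i → CountedOther s' i ∨ CountedOther s r)
    (hs351 : s'.pc i = .s351 → seenCount s' i = 1) : CountInv s' := by
  constructor
  · intro q hq
    rcases eq_or_ne q i with rfl | hqi
    · exact hself hq
    · simp only [selfCount, h.scanLow_of_ne hqi, h.seenCount_of_ne hqi]
      exact hc.self_le_seenCount q (h.pc_of_ne hqi ▸ hq)
  · intro q r hqr hq hr hqr' hrq
    rcases eq_or_ne q i with rfl | hqi
    · rw [h.countedOther_iff_of_ne hqr.symm]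
      exact hpair r hqr.symm hq (h.pc_of_ne hqr.symm ▸ hr)
        hqr' (h.scanLow_of_ne hqr.symm ▸ hrq)
    rcases eq_or_ne r i with rfl | hri
    · rw [h.countedOther_iff_of_ne hqi]
      exact (hpair q hqi hr (h.pc_of_ne hqi ▸ hq) hrq (h.scanLow_of_ne hqi ▸ hqr')).symm
    rw [h.countedOther_iff_of_ne hqi, h.countedOther_iff_of_ne hri]
    exact hc.countedOther_of_mutual q r hqr (h.pc_of_ne hqi ▸ hq) (h.pc_of_ne hri ▸ hr)
      (h.scanLow_of_ne hqi ▸ hqr') (h.scanLow_of_ne hri ▸ hrq)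
  · intro q hq
    rcases eq_or_ne q i with rfl | hqi
    · exact hs351 hq
    · rw [h.seenCount_of_ne hqi]
      exact hc.seenCount_of_s351 q (h.pc_of_ne hqi ▸ hq)

theorem CountInv.of_not_scanSt (hc : CountInv s) (h : Step i s s')
    (hi : ¬ ScanSt (s'.pc i)) : CountInv s' :=
  hc.of_step h (absurd · hi) (fun _ _ h' => absurd h' hi)
    (fun h' => absurd (by simp [ScanSt, h']) hi)

theorem CountInv.of_scan_same (hc : CountInv s) (h : Step i s s') (hi : ScanSt (s.pc i))
    (hlow : scanLow s' i = scanLow s i) (hseen : seenCount s' i = seenCount s i)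
    (hs351 : s'.pc i = .s351 → seenCount s' i = 1) : CountInv s' := by
  have hother : CountedOther s' i ↔ CountedOther s i := by
    simp only [CountedOther, selfCount, hlow, hseen]
  refine hc.of_step h (fun _ => ?_) (fun r hri _ hr h1 h2 => ?_) hs351
  · simpa only [selfCount, hlow, hseen] using hc.self_le_seenCount i hi
  · rw [hother]
    exact hc.countedOther_of_mutual i r hri.symm hi hr (hlow ▸ h1) h2

theorem CountInv.of_scan_start (hc : CountInv s) (h : Step i s s')
    (hlow : scanLow s' i = N) (hi : s'.pc i ≠ .s351) : CountInv s' := by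
  refine hc.of_step h (fun _ => ?_) (fun r _ _ _ h1 _ => ?_) (absurd · hi)
  · simp [selfCount, hlow, not_le.2 i.isLt]
  · have := r.isLt; omega

theorem CountInv.of_scan_skip (hc : CountInv s) (h : Step i s s') (hi : ScanSt (s.pc i))
    (hlow : scanLow s' i + 1 = scanLow s i) (hseen : seenCount s' i = seenCount s i)
    (hskip : ∀ r : Fin N, ScanSt (s.pc r) → (r : ℕ) ≠ scanLow s' i)
    (hi' : s'.pc i ≠ .s351) : CountInv s' := by
  have hwiden : ∀ r : Fin N, ScanSt (s.pc r) → scanLow s' i ≤ r → scanLow s i ≤ r :=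
    fun r hr h1 => by have := hskip r hr; omega
  have hself : selfCount s' i = selfCount s i := by
    simp only [selfCount]
    by_cases hle : scanLow s' i ≤ i
    · simp [hle, hwiden i hi hle]
    · simp only [hle, if_false]; split_ifs <;> omega
  refine hc.of_step h (fun _ => ?_) (fun r hri _ hr h1 h2 => ?_) (absurd · hi')
  · rw [hself, hseen]; exact hc.self_le_seenCount i hi
  · have hother : CountedOther s' i ↔ CountedOther s i := by
      simp only [CountedOther, hself, hseen]
    rw [hother]
    exact hc.countedOther_of_mutual i r hri.symm hi hr (hwiden r hr h1) h2

theorem CountInv.of_scan_count (hc : CountInv s) (h : Step i s s') (hi : ScanSt (s.pc i))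
    (hlow : scanLow s' i + 1 = scanLow s i) (hseen : seenCount s' i = seenCount s i + 1)
    (hi' : s'.pc i ≠ .s351) : CountInv s' := by
  have hself_le : selfCount s' i ≤ selfCount s i + 1 := by
    simp only [selfCount]; split_ifs <;> omega
  have hold := hc.self_le_seenCount i hi
  refine hc.of_step h (fun _ => by omega) (fun r hri _ hr h1 h2 => ?_) (absurd · hi')
  by_cases hr_old : scanLow s i ≤ r
  · refine (hc.countedOther_of_mutual i r hri.symm hi hr hr_old h2).imp_left ?_
    simp only [CountedOther]; omega
  · -- `r` is the index just examined, so the new count includes `r ≠ i`.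
    have hr_eq : scanLow s' i = r := by omega
    have hself : selfCount s' i = selfCount s i := by
      have : (r : ℕ) ≠ i := fun e => hri (Fin.ext e)
      simp only [selfCount]; split_ifs <;> omega
    left; simp only [CountedOther]; omega

theorem CountInv.step (hf : CandFlagInv s) (hc : CountInv s) (h : Step i s s') :
    CountInv s' := by
  by_cases hi : ScanSt (s'.pc i)
  swap; · exact hc.of_not_scanSt h hi
  have h' := h
  cases h' with
  | t33 _ _ hg => exact hc.of_scan_start h (by simp [scanLow]) (by simp)
  | t34done _ _ hg hz =>
    exact hc.of_scan_same h (by simp [ScanSt, hg]) (by simp [scanLow, hg, hz])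
      (by simp [seenCount, hg]) (by simp)
  | t34cand _ _ j hg hz hj _ =>
    exact hc.of_scan_count h (by simp [ScanSt, hg]) (by simp [scanLow, hg]; omega)
      (by simp [seenCount, hg]) (by simp)
  | t34nocand _ _ j hg hz hj hj_flag =>
    refine hc.of_scan_skip h (by simp [ScanSt, hg]) (by simp [scanLow, hg]; omega)
      (by simp [seenCount, hg]) (fun r hr hrj => hj_flag ?_) (by simp)
    have : r = j := Fin.ext (by simp [scanLow] at hrj; omega)
    exact this ▸ hf r hr.candSt
  | t341 _ _ hg =>
    exact hc.of_scan_same h (by simp [ScanSt, hg]) (by simp [scanLow, hg])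
      (by simp [seenCount, hg]) (by simp)
  | t35yes _ _ hg _ hn =>
    exact hc.of_scan_same h (by simp [ScanSt, hg]) (by simp [scanLow, hg])
      (by simp [seenCount, hg]) (by simp [seenCount, hn])
  | _ => simp [ScanSt] at hi


structure TurnInv_s8 (s : St N) : Prop where
  turn_eq_free_of_s351 : ∀ q, s.pc q = .s351 → s.turn = .free
  turn_eq_id_of_cs : ∀ q, s.pc q = .cs → s.turn = .id q
  turn_eq_thinking_of_exit : ∀ q, ExtCS (s.pc q) → s.pc q ≠ .cs → s.turn = .thinking
  eq_of_extCS : ∀ q r, ExtCS (s.pc q) → ExtCS (s.pc r) → q = r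

theorem TurnInv_s8.of_turn_eq (ht : TurnInv_s8 s) (h : Step i s s') (hturn : s'.turn = s.turn)
    (hs351 : s'.pc i = .s351 → s.turn = .free) (hcs : s'.pc i = .cs → s.turn = .id i)
    (hexit : ExtCS (s'.pc i) → s'.pc i ≠ .cs → s.turn = .thinking)
    (hext : ExtCS (s'.pc i) → ∀ r, r ≠ i → ¬ ExtCS (s.pc r)) : TurnInv_s8 s' := by
  rw [← hturn] at hs351 hcs hexit
  constructor
  · intro q hq
    rcases eq_or_ne q i with rfl | hqi
    · exact hs351 hq
    · exact hturn ▸ ht.turn_eq_free_of_s351 q (h.pc_of_ne hqi ▸ hq)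
  · intro q hq
    rcases eq_or_ne q i with rfl | hqi
    · exact hcs hq
    · exact hturn ▸ ht.turn_eq_id_of_cs q (h.pc_of_ne hqi ▸ hq)
  · intro q hq hq'
    rcases eq_or_ne q i with rfl | hqi
    · exact hexit hq hq'
    · rw [h.pc_of_ne hqi] at hq hq'
      exact hturn ▸ ht.turn_eq_thinking_of_exit q hq hq'
  · intro q r hq hr
    by_cases hqi : q = i <;> by_cases hri : r = i
    · rw [hqi, hri]
    · subst hqi; exact absurd (h.pc_of_ne hri ▸ hr) (hext hq r hri)
    · subst hri; exact absurd (h.pc_of_ne hqi ▸ hq) (hext hr q hqi)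
    · exact ht.eq_of_extCS q r (h.pc_of_ne hqi ▸ hq) (h.pc_of_ne hri ▸ hr)

theorem TurnInv_s8.of_forall_ne_s351_not_extCS (hs : ∀ q, s.pc q ≠ .s351 ∧ ¬ ExtCS (s.pc q)) :
    TurnInv_s8 s where
  turn_eq_free_of_s351 q hq := absurd hq (hs q).1
  turn_eq_id_of_cs q hq := absurd (Or.inl hq) (hs q).2
  turn_eq_thinking_of_exit q hq _ := absurd hq (hs q).2
  eq_of_extCS q _ hq _ := absurd hq (hs q).2

theorem TurnInv_s8.not_extCS_of_free (ht : TurnInv_s8 s) (hfree : s.turn = .free) (q : Fin N) :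
    ¬ ExtCS (s.pc q) := by
  intro hq
  by_cases hcs : s.pc q = .cs
  · simp [ht.turn_eq_id_of_cs q hcs] at hfree
  · simp [ht.turn_eq_thinking_of_exit q hq hcs] at hfree

theorem TurnInv_s8.of_claim (hc : CountInv s) (ht : TurnInv_s8 s) (h : Step i s s')
    (hi : s.pc i = .s351) (hi' : s'.pc i = .s352) : TurnInv_s8 s' := by
  refine .of_forall_ne_s351_not_extCS fun q => ?_
  rcases eq_or_ne q i with rfl | hqi
  · simp [hi', ExtCS]
  · rw [h.pc_of_ne hqi]
    exact ⟨fun hq => hqi (hc.eq_of_s351 hq hi),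
      ht.not_extCS_of_free (ht.turn_eq_free_of_s351 i hi) q⟩

theorem TurnInv_s8.of_enter_cs (ht : TurnInv_s8 s) (h : Step i s s') (hturn : s.turn = .id i)
    (hi' : s'.pc i = .cs) (hturn' : s'.turn = s.turn) : TurnInv_s8 s' := by
  refine ht.of_turn_eq h hturn' (by simp [hi']) (fun _ => hturn) (fun _ h' => absurd hi' h')
    (fun _ r hri hr => ?_)
  by_cases hcs : s.pc r = .cs
  · have := ht.turn_eq_id_of_cs r hcs
    simp_all
  · simp [ht.turn_eq_thinking_of_exit r hr hcs] at hturn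

theorem TurnInv_s8.of_exit_move (ht : TurnInv_s8 s) (h : Step i s s') (hturn' : s'.turn = s.turn)
    (hi : ExtCS (s.pc i)) (hi_cs : s.pc i ≠ .cs) (hi' : ExtCS (s'.pc i))
    (hi'_cs : s'.pc i ≠ .cs) : TurnInv_s8 s' := by
  have hnot351 : s'.pc i ≠ .s351 := by
    rcases hi' with h' | h' | h' | h' <;> simp [h']
  exact ht.of_turn_eq h hturn' (absurd · hnot351) (absurd · hi'_cs)
    (fun _ _ => ht.turn_eq_thinking_of_exit i hi hi_cs)
    (fun _ r hri hr => hri (ht.eq_of_extCS r i hr hi))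

theorem TurnInv_s8.of_release (ht : TurnInv_s8 s) (h : Step i s s') (hi : s.pc i = .cs)
    (hi' : s'.pc i = .s5) (hturn' : s'.turn = .thinking) : TurnInv_s8 s' := by
  have hturn := ht.turn_eq_id_of_cs i hi
  have hother : ∀ q, q ≠ i → ¬ ExtCS (s'.pc q) := fun q hqi hq =>
    hqi (ht.eq_of_extCS q i (h.pc_of_ne hqi ▸ hq) (Or.inl hi))
  constructor
  · intro q hq
    rcases eq_or_ne q i with rfl | hqi
    · simp [hi'] at hq
    · simp [ht.turn_eq_free_of_s351 q (h.pc_of_ne hqi ▸ hq)] at hturn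
  · intro q hq
    rcases eq_or_ne q i with rfl | hqi
    · simp [hi'] at hq
    · exact absurd (Or.inl hq) (hother q hqi)
  · exact fun _ _ _ => hturn'
  · intro q r hq hr
    by_contra hqr
    rcases eq_or_ne q i with rfl | hqi
    · exact hother r (Ne.symm hqr) hr
    · exact hother q hqi hq

theorem TurnInv_s8.of_handover (ht : TurnInv_s8 s) (h : Step i s s') (hi : s.pc i = .s63)
    (hi' : s'.pc i = .s8) : TurnInv_s8 s' := by
  have hiext : ExtCS (s.pc i) := by simp [ExtCS, hi]
  have hturn := ht.turn_eq_thinking_of_exit i hiext (by simp [hi])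
  refine .of_forall_ne_s351_not_extCS fun q => ?_
  rcases eq_or_ne q i with rfl | hqi
  · simp [hi', ExtCS]
  · rw [h.pc_of_ne hqi]
    exact ⟨fun hq => by simp [ht.turn_eq_free_of_s351 q hq] at hturn,
      fun hq => hqi (ht.eq_of_extCS q i hq hiext)⟩

theorem TurnInv_s8.step (hc : CountInv s) (ht : TurnInv_s8 s) (h : Step i s s') : TurnInv_s8 s' := by
  have h' := h
  cases h' with
  | t35yes _ _ _ hfree _ =>
    exact ht.of_turn_eq h rfl (fun _ => hfree) (by simp) (by simp [ExtCS]) (by simp [ExtCS])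
  | t351 _ _ hg => exact ht.of_claim hc h hg (by simp)
  | t4 _ _ _ hturn => exact ht.of_enter_cs h hturn (by simp) rfl
  | tcs _ _ hg => exact ht.of_release h hg (by simp) rfl
  | t5 _ _ hg | t6exit _ _ hg _ | t6found _ _ hg _ _ _ | t6notfound _ _ hg _ _ _ =>
    exact ht.of_exit_move h rfl (by simp [ExtCS, hg]) (by simp [hg]) (by simp [ExtCS])
      (by simp)
  | t63free _ _ hg _ | t63id _ _ _ hg _ => exact ht.of_handover h hg (by simp)
  | _ => exact ht.of_turn_eq h rfl (by simp) (by simp) (by simp [ExtCS]) (by simp [ExtCS])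


structure Inv_s8 (s : St N) : Prop where
  candFlag : CandFlagInv s
  count : CountInv s
  turn : TurnInv_s8 s

theorem Inv_s8.step (hs : Inv_s8 s) (h : Step i s s') : Inv_s8 s' :=
  ⟨hs.candFlag.step h, hs.count.step hs.candFlag h, hs.turn.step hs.count h⟩

theorem inv_initSt_s8 (N : ℕ) : Inv_s8 (initSt N) where
  candFlag _ h := by simp [initSt, CandSt] at h
  count :=
    ⟨fun _ h => by simp [initSt, ScanSt] at h, fun _ _ _ h => by simp [initSt, ScanSt] at h,
      fun _ h => by simp [initSt] at h⟩
  turn := .of_forall_ne_s351_not_extCS fun _ => by simp [initSt, ExtCS]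

theorem TurnInv_s8.turn_eq_of_step (ht : TurnInv_s8 s) (h : Step i s s') {a : Fin N}
    (hturn : s.turn = .id a) (ha : s.pc a ≠ .cs) : s'.turn = .id a := by
  cases h with
  | t351 _ _ hg => simp [ht.turn_eq_free_of_s351 i hg] at hturn
  | tcs _ _ hg =>
    obtain rfl : i = a := by simpa [ht.turn_eq_id_of_cs i hg] using hturn
    exact absurd hg ha
  | t63free _ _ hg _ | t63id _ _ _ hg _ =>
    simp [ht.turn_eq_thinking_of_exit i (by simp [ExtCS, hg]) (by simp [hg])] at hturn
  | _ => exact hturn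

theorem Step.turn_eq_of_assign {p a : Fin N} (h : Step p s s')
    (hassign : (p = a ∧ s.pc p = .s351) ∨ (s.pc p = .s63 ∧ s.nextTurn p = .id a)) :
    s'.turn = .id a := by
  cases h <;> rcases hassign with ⟨rfl, hpc⟩ | ⟨hpc, hnt⟩ <;> simp_all

theorem Exec.step_or_eq (e : Exec N) (k : ℕ) :
    (∃ i, Step i (e.states k) (e.states (k + 1))) ∨ e.states (k + 1) = e.states k := by
  have h := e.step k
  cases hk : e.sched k with
  | none => rw [hk] at h; exact .inr h
  | some i => rw [hk] at h; exact .inl ⟨i, h⟩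

theorem Exec.inv (e : Exec N) (k : ℕ) : Inv_s8 (e.states k) := by
  induction k with
  | zero => rw [e.init]; exact inv_initSt_s8 N
  | succ k ih =>
    rcases e.step_or_eq k with ⟨i, h⟩ | h
    · exact ih.step h
    · rwa [h]

theorem Exec.turn_eq_id_of_forall_pc_ne_cs (e : Exec N) {a : Fin N} {k m : ℕ}
    (hkm : k ≤ m) (hk : (e.states k).turn = .id a)
    (hcs : ∀ j, k ≤ j → j < m → (e.states j).pc a ≠ .cs) :
    (e.states m).turn = .id a := by
  induction m, hkm using Nat.le_induction with
  | base => exact hk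
  | succ m hkm ih =>
    have hm := ih fun j hj hjm => hcs j hj (by omega)
    rcases e.step_or_eq m with ⟨i, h⟩ | h
    · exact (e.inv m).turn.turn_eq_of_step h hm (hcs m hkm (by omega))
    · rwa [h]

end Sym

open Sym in
/-- **Lemma: a turn assignment is fixed (symmetric algorithm).**
In every execution, if at some step `n` the shared variable `turn` is
assigned the value `a` — either by process `a` itself taking the transition
at state 3.5.1 that sets `turn := a` (reaching 3.5.2), or by some process at
state 6.3 with `nextTurn = a` setting `turn := nextTurn` (reaching 8) —
then `turn` keeps the value `a` (no process changes it) until process `a`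
enters the critical section. -/
theorem sym_turn_assignment_fixed {N : ℕ} (e : Exec N) (n : ℕ) (a : Fin N)
    (hassign : ∃ p : Fin N, e.sched n = some p ∧
      ((p = a ∧ (e.states n).pc p = PC.s351) ∨
       ((e.states n).pc p = PC.s63 ∧ (e.states n).nextTurn p = Turn.id a))) :
    ∀ m, n < m →
      (∀ k, n < k → k ≤ m → (e.states k).pc a ≠ PC.cs) →
      (e.states m).turn = Turn.id a := by
  obtain ⟨p, hsched, hcase⟩ := hassign
  have hstep : Step p (e.states n) (e.states (n + 1)) := by
    simpa [hsched] using e.step n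
  intro m hnm hcs
  exact e.turn_eq_id_of_forall_pc_ne_cs hnm (hstep.turn_eq_of_assign hcase)
    fun k hk hkm => hcs k hk hkm.le
end
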